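/- arXiv:2109.01224 — 6 statements merged into one kernel-verified Lean document; each statement's English description precedes it below -/
import Mathlib

section
/- Let B(X, X, E_A) be the bipartite graph associated with a digraph D([A]) on state set X, and suppose every maximum matching of B has at least one right unmatched vertex lying in a fixed subset X_att ⊆ X. Then for any matrix structure [B_def] whose edges only enter vertices of X_def = X \ X_att, some maximum matching of the bipartite graph of ([A],[B_def]) leaves a vertex of X_att unmatched; consequently the configuration cannot satisfy the matching condition for structural controllability using inputs connected only to X_def. -/
open scoped Classical

noncomputable section

/-- A set of edges in a bipartite graph (edges from left type `L` to right type `R`)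
is a matching if no two distinct edges share a left or a right vertex. -/
def IsMatching {L R : Type*} (M : Finset (L × R)) : Prop :=
  ∀ e ∈ M, ∀ f ∈ M, e ≠ f → e.1 ≠ f.1 ∧ e.2 ≠ f.2

/-- `M` is a matching of the bipartite graph with edge set `Ed`. -/
def IsMatchingOf {L R : Type*} (Ed M : Finset (L × R)) : Prop :=
  M ⊆ Ed ∧ IsMatching M

/-- `M` is a maximum matching of the bipartite graph with edge set `Ed`. -/
def IsMaxMatching {L R : Type*} (Ed M : Finset (L × R)) : Prop :=
  IsMatchingOf Ed M ∧ ∀ M', IsMatchingOf Ed M' → M'.card ≤ M.card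

/-- The right vertices left unmatched by the matching `M`. -/
def unmatchedR {L R : Type*} [Fintype R] (M : Finset (L × R)) : Finset R :=
  Finset.univ.filter (fun r => ∀ e ∈ M, e.2 ≠ r)

/-- The maximum matching number of the bipartite graph with edge set `Ed`. -/
def matchNum {L R : Type*} (Ed : Finset (L × R)) : ℕ :=
  (Ed.powerset.filter IsMatching).sup Finset.card

/-- The bipartite graph of the concatenation `[[A],[B]]`: left vertices are the columns of
`[A]` (states) together with the columns of `[B]` (inputs), right vertices are the states. -/
def concatAB {X I : Type*} [DecidableEq X] [DecidableEq I]
    (EA : Finset (X × X)) (EB : Finset (I × X)) : Finset ((X ⊕ I) × X) :=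
  EA.image (fun e => (Sum.inl e.1, e.2)) ∪ EB.image (fun e => (Sum.inr e.1, e.2))

/-!
Every matching extends to a maximum matching that still covers the right vertices it covered:
a matching smaller than another one can be augmented by one edge without losing right vertices
(swap edges of the smaller matching for edges of the larger one until a free right vertex is
reached). Since inputs only enter `X_def`, a matching of `([A],[B_def])` covering `X_att` would
restrict to a matching of `B([A])` covering `X_att`, and hence extend to a maximum matching of
`B([A])` covering `X_att`, which the hypothesis forbids.
-/

open Finset

section Matching

variable {L R : Type*}

theorem IsMatching.mono {M N : Finset (L × R)} (hN : IsMatching N) (hMN : M ⊆ N) :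
    IsMatching M :=
  fun e he f hf hef => hN e (hMN he) f (hMN hf) hef

theorem IsMatching.insert_of_forall_ne {M : Finset (L × R)} {e : L × R} (hM : IsMatching M)
    (he : ∀ f ∈ M, f.1 ≠ e.1 ∧ f.2 ≠ e.2) : IsMatching (insert e M) := by
  intro a ha b hb hab
  rw [mem_insert] at ha hb
  rcases ha with rfl | ha <;> rcases hb with rfl | hb
  · exact absurd rfl hab
  · exact (he b hb).imp Ne.symm Ne.symm
  · exact he a ha
  · exact hM a ha b hb hab

theorem IsMatching.card_image_fst {M : Finset (L × R)} (hM : IsMatching M) :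
    (M.image Prod.fst).card = M.card :=
  card_image_of_injOn fun e he f hf hef => by_contra fun hne => (hM e he f hf hne).1 hef

theorem IsMatching.exists_mem_fst_notMem {M N : Finset (L × R)} (hM : IsMatching M)
    (hN : IsMatching N) (hlt : M.card < N.card) : ∃ e ∈ N, ∀ f ∈ M, f.1 ≠ e.1 := by
  have hnsub : ¬ N.image Prod.fst ⊆ M.image Prod.fst := fun h => by
    have := card_le_card h
    rw [hM.card_image_fst, hN.card_image_fst] at this
    omega
  obtain ⟨l, hlN, hlM⟩ := not_subset.1 hnsub
  obtain ⟨e, he, rfl⟩ := mem_image.1 hlN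
  exact ⟨e, he, fun f hf hfe => hlM (mem_image.2 ⟨f, hf, hfe⟩)⟩

theorem IsMatching.exists_augment {M N : Finset (L × R)} (hM : IsMatching M)
    (hN : IsMatching N) (hlt : M.card < N.card) :
    ∃ M' ⊆ M ∪ N, IsMatching M' ∧ M'.card = M.card + 1 ∧
      M.image Prod.snd ⊆ M'.image Prod.snd := by
  obtain ⟨⟨l, r⟩, hlrN, hl⟩ := hM.exists_mem_fst_notMem hN hlt
  have hlrM : (l, r) ∉ M := fun h => hl _ h rfl
  by_cases hr : ∃ e ∈ M, e.2 = r
  · obtain ⟨⟨l', r'⟩, hl'M, hr' : r' = r⟩ := hr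
    subst r'
    -- Trading `(l', r)` for `(l, r)` keeps size and right cover and brings `M` closer to `N`.
    set M₁ := insert (l, r) (M.erase (l', r))
    have hM₁ : IsMatching M₁ := (hM.mono (erase_subset _ _)).insert_of_forall_ne fun f hf =>
      ⟨hl f (mem_of_mem_erase hf), (hM f (mem_of_mem_erase hf) _ hl'M (ne_of_mem_erase hf)).2⟩
    have hcard : M₁.card = M.card := by
      rw [card_insert_of_notMem fun h => hlrM (mem_of_mem_erase h), card_erase_add_one hl'M]
    have hcover : M.image Prod.snd ⊆ M₁.image Prod.snd := by
      intro x hx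
      obtain ⟨f, hf, rfl⟩ := mem_image.1 hx
      by_cases hfl' : f = (l', r)
      · exact mem_image.2 ⟨(l, r), mem_insert_self _ _, by simp [hfl']⟩
      · exact mem_image_of_mem _ (mem_insert_of_mem (mem_erase.2 ⟨hfl', hf⟩))
    have hl'rN : (l', r) ∉ N := fun h => hl _ hl'M <|
      by_contra fun hne => (hN _ h _ hlrN fun heq => hne (congrArg Prod.fst heq)).2 rfl
    have hdec : (N \ M₁).card < (N \ M).card := by
      have hsub : N \ M₁ ⊆ N \ M := fun e he => by
        obtain ⟨heN, heM₁⟩ := mem_sdiff.1 he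
        refine mem_sdiff.2 ⟨heN, fun heM => heM₁ (mem_insert_of_mem (mem_erase.2 ⟨?_, heM⟩))⟩
        rintro rfl
        exact hl'rN heN
      refine card_lt_card ((ssubset_iff_of_subset hsub).2 ⟨(l, r), ?_, ?_⟩)
      · exact mem_sdiff.2 ⟨hlrN, hlrM⟩
      · exact fun h => (mem_sdiff.1 h).2 (mem_insert_self _ _)
    obtain ⟨M', hM'sub, hM', hM'card, hM'cover⟩ := hM₁.exists_augment hN (hcard ▸ hlt)
    have hM₁sub : M₁ ⊆ M ∪ N :=
      insert_subset (mem_union_right _ hlrN) ((erase_subset _ _).trans subset_union_left)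
    exact ⟨M', hM'sub.trans (union_subset hM₁sub subset_union_right), hM', hcard ▸ hM'card,
      hcover.trans hM'cover⟩
  · push Not at hr
    exact ⟨insert (l, r) M, insert_subset (mem_union_right _ hlrN) subset_union_left,
      hM.insert_of_forall_ne fun f hf => ⟨hl f hf, hr f hf⟩, card_insert_of_notMem hlrM,
      image_subset_image (subset_insert _ _)⟩
termination_by (N \ M).card

theorem IsMatchingOf.exists_isMaxMatching_image_snd_subset {Ed M : Finset (L × R)}
    (hM : IsMatchingOf Ed M) :
    ∃ M', IsMaxMatching Ed M' ∧ M.image Prod.snd ⊆ M'.image Prod.snd := by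
  obtain ⟨M', hM'S, hmax⟩ := exists_max_image
    (Ed.powerset.filter fun M' => IsMatching M' ∧ M.image Prod.snd ⊆ M'.image Prod.snd) card
    ⟨M, by simp [hM.1, hM.2]⟩
  simp only [mem_filter, mem_powerset] at hM'S hmax
  refine ⟨M', ⟨⟨hM'S.1, hM'S.2.1⟩, fun N hN => ?_⟩, hM'S.2.2⟩
  by_contra! hlt
  obtain ⟨M'', hsub, hM'', hcard, hcover⟩ := hM'S.2.1.exists_augment hN.2 hlt
  have := hmax M'' ⟨hsub.trans (union_subset hM'S.1 hN.1), hM'', hM'S.2.2.trans hcover⟩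
  omega

theorem exists_isMaxMatching (Ed : Finset (L × R)) : ∃ M, IsMaxMatching Ed M :=
  have hempty : IsMatchingOf Ed ∅ := ⟨empty_subset _, fun _ he => absurd he (notMem_empty _)⟩
  (hempty.exists_isMaxMatching_image_snd_subset).imp fun _ h => h.1

theorem IsMatching.preimage_prodMap {L' : Type*} {M : Finset (L × R)} (hM : IsMatching M)
    {f : L' → L} (hf : Function.Injective f) :
    IsMatching (M.preimage (Prod.map f id) (hf.prodMap Function.injective_id).injOn) := by
  intro a ha b hb hab
  have := hM _ (mem_preimage.1 ha) _ (mem_preimage.1 hb) ((hf.prodMap Function.injective_id).ne hab)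
  exact ⟨fun h => this.1 (congrArg f h), this.2⟩

theorem mem_unmatchedR [Fintype R] {M : Finset (L × R)} {r : R} :
    r ∈ unmatchedR M ↔ r ∉ M.image Prod.snd := by
  simp only [unmatchedR, mem_filter, mem_univ, true_and, mem_image, not_exists, not_and]

end Matching

section Concat

variable {X I : Type*} {EA : Finset (X × X)} {EB : Finset (I × X)}

theorem inl_mem_concatAB {a x : X} : (Sum.inl a, x) ∈ concatAB EA EB ↔ (a, x) ∈ EA := by
  simp [concatAB]

theorem inr_mem_concatAB {i : I} {x : X} : (Sum.inr i, x) ∈ concatAB EA EB ↔ (i, x) ∈ EB := by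
  simp [concatAB]

theorem exists_notMem_image_snd_of_isMatchingOf_concatAB [Fintype X] {Xatt : Set X}
    (hA : ∀ M : Finset (X × X), IsMaxMatching EA M → ∃ x ∈ unmatchedR M, x ∈ Xatt)
    (hB : ∀ e ∈ EB, e.2 ∉ Xatt) {M : Finset ((X ⊕ I) × X)}
    (hM : IsMatchingOf (concatAB EA EB) M) : ∃ x ∈ Xatt, x ∉ M.image Prod.snd := by
  by_contra! hcov
  have hMA : IsMatchingOf EA (M.preimage (Prod.map Sum.inl id)
      ((Sum.inl_injective.prodMap Function.injective_id).injOn)) :=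
    ⟨fun ⟨_, _⟩ he =>
      inl_mem_concatAB.1 (hM.1 ((mem_preimage (f := Prod.map Sum.inl id)).1 he)),
      hM.2.preimage_prodMap Sum.inl_injective⟩
  obtain ⟨M', hM'max, hM'cover⟩ := hMA.exists_isMaxMatching_image_snd_subset
  obtain ⟨x, hxun, hx⟩ := hA M' hM'max
  refine mem_unmatchedR.1 hxun (hM'cover ?_)
  obtain ⟨⟨a | i, y⟩, he, rfl⟩ := mem_image.1 (hcov x hx)
  · exact mem_image.2 ⟨(a, y), mem_preimage.2 he, rfl⟩
  · exact absurd hx (hB _ (inr_mem_concatAB.1 (hM.1 he)))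

end Concat

/-- if every maximum matching of `B([A])` has a right unmatched vertex in
`X_att`, then for any `[B_def]` whose edges only enter `X_def = X \ X_att`, some maximum
matching of the bipartite graph of `([A],[B_def])` leaves a vertex of `X_att` unmatched;
consequently no matching of that graph covers all state vertices. -/
theorem stmt_5 {X I : Type*} [Fintype X] (EA : Finset (X × X))
    (Xatt Xdef : Set X) (hpart : Xdef = Xattᶜ)
    (hA : ∀ M : Finset (X × X), IsMaxMatching EA M → ∃ x ∈ unmatchedR M, x ∈ Xatt)
    (EBdef : Finset (I × X)) (hB : ∀ e ∈ EBdef, e.2 ∈ Xdef) :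
    (∃ M : Finset ((X ⊕ I) × X), IsMaxMatching (concatAB EA EBdef) M ∧
      ∃ x ∈ unmatchedR M, x ∈ Xatt) ∧
    ¬ ∃ M : Finset ((X ⊕ I) × X), IsMatchingOf (concatAB EA EBdef) M ∧
      ∀ x : X, ∃ e ∈ M, e.2 = x := by
  subst hpart
  have key (M) (hM : IsMatchingOf (concatAB EA EBdef) M) : ∃ x ∈ Xatt, x ∉ M.image Prod.snd :=
    exists_notMem_image_snd_of_isMatchingOf_concatAB hA hB hM
  constructor
  · obtain ⟨M, hM⟩ := exists_isMaxMatching (concatAB EA EBdef)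
    obtain ⟨x, hx, hxM⟩ := key M hM.1
    exact ⟨M, hM, x, mem_unmatchedR.2 hxM, hx⟩
  · rintro ⟨M, hM, hall⟩
    obtain ⟨x, -, hxM⟩ := key M hM
    exact hxM (mem_image.2 (hall x))
end
end

section
/- (Minimum input theorem) Let m be the number of right unmatched vertices of a maximum matching of B([A]). If m > 0, then any structured input matrix [B] making ([A],[B]) structurally controllable must have at least m columns; i.e., structural controllability requires at least m inputs. -/
/-!
A matching of `[[A],[B]]` covering all `n` state vertices has `n` edges. Those leaving a state
vertex form a matching of `B([A])`, so there are at most `matchNum [A]` of them; those leaving an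
input vertex use distinct inputs, so there are at most as many as there are inputs.
-/

open scoped Classical

noncomputable section

open Finset

section Matching

variable {L R : Type*}

theorem IsMatching.injOn_fst {M : Finset (L × R)} (hM : IsMatching M) :
    Set.InjOn Prod.fst (M : Set (L × R)) :=
  fun e he f hf hef => by_contra fun hne => (hM e he f hf hne).1 hef

theorem IsMatching.injOn_snd {M : Finset (L × R)} (hM : IsMatching M) :
    Set.InjOn Prod.snd (M : Set (L × R)) :=
  fun e he f hf hef => by_contra fun hne => (hM e he f hf hne).2 hef

theorem IsMatching.card_le_card_left [Fintype L] {M : Finset (L × R)} (hM : IsMatching M) :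
    #M ≤ Fintype.card L := by
  rw [← card_image_of_injOn hM.injOn_fst]
  exact card_le_univ _

theorem IsMatching.card_eq_card_right [Fintype R] {M : Finset (L × R)} (hM : IsMatching M)
    (hcov : ∀ r : R, ∃ e ∈ M, e.2 = r) : #M = Fintype.card R := by
  rw [← card_image_of_injOn hM.injOn_snd, ← card_univ]
  congr
  exact eq_univ_of_forall fun r => mem_image.2 (hcov r)

theorem IsMatchingOf.card_le_matchNum {Ed M : Finset (L × R)} (hM : IsMatchingOf Ed M) :
    #M ≤ matchNum Ed :=
  le_sup (mem_filter.2 ⟨mem_powerset.2 hM.1, hM.2⟩)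

end Matching

section SplitEdges

variable {L L' R : Type*}

def splitEdges (M : Finset ((L ⊕ L') × R)) : Finset (L × R ⊕ L' × R) :=
  M.map (Equiv.sumProdDistrib L L' R).toEmbedding

theorem mem_toLeft_splitEdges {M : Finset ((L ⊕ L') × R)} {p : L × R} :
    p ∈ (splitEdges M).toLeft ↔ (Sum.inl p.1, p.2) ∈ M := by
  simp [splitEdges, mem_map_equiv]

theorem mem_toRight_splitEdges {M : Finset ((L ⊕ L') × R)} {p : L' × R} :
    p ∈ (splitEdges M).toRight ↔ (Sum.inr p.1, p.2) ∈ M := by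
  simp [splitEdges, mem_map_equiv]

theorem card_splitEdges (M : Finset ((L ⊕ L') × R)) :
    #(splitEdges M).toLeft + #(splitEdges M).toRight = #M := by
  rw [card_toLeft_add_card_toRight, splitEdges, card_map]

theorem IsMatching.toLeft_splitEdges {M : Finset ((L ⊕ L') × R)} (hM : IsMatching M) :
    IsMatching (splitEdges M).toLeft := by
  intro e he f hf hne
  have := hM _ (mem_toLeft_splitEdges.1 he) _ (mem_toLeft_splitEdges.1 hf)
    (by simpa [Prod.ext_iff] using hne)
  simpa using this

theorem IsMatching.toRight_splitEdges {M : Finset ((L ⊕ L') × R)} (hM : IsMatching M) :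
    IsMatching (splitEdges M).toRight := by
  intro e he f hf hne
  have := hM _ (mem_toRight_splitEdges.1 he) _ (mem_toRight_splitEdges.1 hf)
    (by simpa [Prod.ext_iff] using hne)
  simpa using this

end SplitEdges

theorem toLeft_splitEdges_subset_of_subset_concatAB {X I : Type*} {EA : Finset (X × X)} {EB : Finset (I × X)}
    {M : Finset ((X ⊕ I) × X)} (hM : M ⊆ concatAB EA EB) : (splitEdges M).toLeft ⊆ EA := by
  intro p hp
  simpa [concatAB] using hM (mem_toLeft_splitEdges.1 hp)

theorem stmt_7_general {X I : Type*} [Fintype X] [Fintype I] (EA : Finset (X × X))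
    (EB : Finset (I × X)) (m : ℕ) (hm : m = Fintype.card X - matchNum EA)
    (hcov : ∃ M : Finset ((X ⊕ I) × X), IsMatchingOf (concatAB EA EB) M ∧
      ∀ x : X, ∃ e ∈ M, e.2 = x) :
    m ≤ Fintype.card I := by
  obtain ⟨M, ⟨hsub, hmat⟩, hcov⟩ := hcov
  have hstates : #(splitEdges M).toLeft ≤ matchNum EA :=
    IsMatchingOf.card_le_matchNum ⟨toLeft_splitEdges_subset_of_subset_concatAB hsub, hmat.toLeft_splitEdges⟩
  have hinputs : #(splitEdges M).toRight ≤ Fintype.card I :=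
    hmat.toRight_splitEdges.card_le_card_left
  have hcard := card_splitEdges M
  rw [hmat.card_eq_card_right hcov] at hcard
  omega

/-- minimum input theorem: if a maximum matching of `B([A])` has `m > 0`
right unmatched vertices, then any `[B]` for which the bipartite graph of `[[A],[B]]`
has a matching covering all `n` right (state) vertices — as required for structural
controllability — must have at least `m` columns (inputs). -/
theorem stmt_7 {X I : Type*} [Fintype X] [Fintype I] (EA : Finset (X × X))
    (EB : Finset (I × X)) (m : ℕ) (hm : m = Fintype.card X - matchNum EA) (hm0 : 0 < m)
    (hcov : ∃ M : Finset ((X ⊕ I) × X), IsMatchingOf (concatAB EA EB) M ∧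
      ∀ x : X, ∃ e ∈ M, e.2 = x) :
    m ≤ Fintype.card I :=
  stmt_7_general EA EB m hm hcov
end
end

section
/- (DoS resilience, necessity) Suppose the defender's inputs u_def can only be connected to states in X_def. If the digraph D([A]) has a non-top-linked SCC all of whose vertices lie in X_att, then the system ([A],[B_def]) is not structurally controllable for any choice of [B_def] supported on X_def; i.e., the system is not structurally resilient to the DoS attack. -/
/-- Reachability by directed paths (possibly of length zero). -/
def Reach {V : Type*} (E : V → V → Prop) : V → V → Prop := Relation.ReflTransGen E

/-- `S` is a strongly connected component of the digraph with edge relation `E`: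
a maximal nonempty set of mutually reachable vertices. -/
def IsSCC {V : Type*} (E : V → V → Prop) (S : Set V) : Prop :=
  S.Nonempty ∧ (∀ a ∈ S, ∀ b ∈ S, Reach E a b) ∧
    ∀ T : Set V, S ⊆ T → (∀ a ∈ T, ∀ b ∈ T, Reach E a b) → T = S

/-- A non-top-linked (source) SCC: an SCC with no incoming edge from outside. -/
def NonTopLinked {V : Type*} (E : V → V → Prop) (S : Set V) : Prop :=
  IsSCC E S ∧ ∀ u v, v ∈ S → u ∉ S → ¬ E u v

/-! A source SCC can only be reached from inside itself, so a state of it is reachable from no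
input vertex unless some input acts on the SCC directly. The defender's inputs act only on
`X_def`, while the SCC lies in `X_att`. -/

theorem Reach.mem_of_mem_of_no_incoming {V : Type*} {E : V → V → Prop} {S : Set V}
    (hS : ∀ u v, v ∈ S → u ∉ S → ¬ E u v) {u v : V} (h : Reach E u v) (hv : v ∈ S) : u ∈ S := by
  induction h using Relation.ReflTransGen.head_induction_on with
  | refl => exact hv
  | head hab _ ih => exact by_contra fun hu => hS _ _ ih hu hab

theorem NonTopLinked.mem_of_reach {V : Type*} {E : V → V → Prop} {S : Set V}
    (hS : NonTopLinked E S) {u v : V} (h : Reach E u v) (hv : v ∈ S) : u ∈ S :=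
  h.mem_of_mem_of_no_incoming hS.2 hv

theorem stmt_9_general {X I : Type*} (A : X → X → Prop)
    (Xdef Xatt : Set X) (hpart : Xdef = Xattᶜ)
    (S : Set X) (hS : NonTopLinked A S) (hSatt : S ⊆ Xatt) :
    ∀ Bdef : I → X → Prop, (∀ i x, Bdef i x → x ∈ Xdef) →
      ¬ ∀ x : X, ∃ i, ∃ x₀, Bdef i x₀ ∧ Reach A x₀ x := by
  intro Bdef hB hall
  obtain ⟨s, hs⟩ := hS.1.1
  obtain ⟨i, x₀, hx₀, hreach⟩ := hall s
  have hx₀def : x₀ ∈ Xdef := hB i x₀ hx₀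
  rw [hpart] at hx₀def
  exact hx₀def (hSatt (hS.mem_of_reach hreach hs))

/-- DoS resilience, necessity: if `D([A])` has a non-top-linked SCC whose
vertices all lie in `X_att`, then no `[B_def]` supported on `X_def` can make every state
reachable from the defender's inputs; the system is not structurally resilient. -/
theorem stmt_9 {X I : Type*} [Fintype X] (A : X → X → Prop)
    (Xdef Xatt : Set X) (hpart : Xdef = Xattᶜ)
    (S : Set X) (hS : NonTopLinked A S) (hSatt : S ⊆ Xatt) :
    ∀ Bdef : I → X → Prop, (∀ i x, Bdef i x → x ∈ Xdef) →
      ¬ ∀ x : X, ∃ i, ∃ x₀, Bdef i x₀ ∧ Reach A x₀ x :=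
  stmt_9_general A Xdef Xatt hpart S hS hSatt
end

section
/- (Integrity attack resilience) Suppose attacker inputs u_att can be connected only to states in X_att. If every maximum matching of B([A_def]) has some right unmatched vertex in X_def, or some non-top-linked SCC of D([A_def]) consists exclusively of X_def vertices, then for every [B_att] supported on X_att, the pair ([A_def],[B_att]) is not structurally controllable. -/
open scoped Classical

noncomputable section

/-- The digraph relation of a structured matrix given by its edge set:
an edge from `a` to `b` iff `(a, b)` is a free entry (column `a`, row `b`). -/
def digraphRel {X : Type*} (A : Finset (X × X)) : X → X → Prop := fun a b => (a, b) ∈ A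

/-- Graph-theoretic criterion for structural controllability of `([A],[B])`:
every right unmatched vertex of some maximum matching of `B([A])` is connected to a
distinct input, and every non-top-linked SCC of `D([A])` has a vertex connected to
some input. -/
def StructCont {X I : Type*} [Fintype X] (A : Finset (X × X)) (B : Finset (I × X)) : Prop :=
  (∃ M : Finset (X × X), IsMaxMatching A M ∧ ∃ f : X → I,
      Set.InjOn f ↑(unmatchedR M) ∧ ∀ x ∈ unmatchedR M, (f x, x) ∈ B) ∧
  (∀ S : Set X, NonTopLinked (digraphRel A) S → ∃ x ∈ S, ∃ i : I, (i, x) ∈ B)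

namespace StructCont

variable {X I : Type*} [Fintype X] {A : Finset (X × X)} {B : Finset (I × X)} {T : Set X}

theorem exists_isMaxMatching_unmatchedR_subset (hc : StructCont A B)
    (hB : ∀ e ∈ B, e.2 ∈ T) : ∃ M, IsMaxMatching A M ∧ ↑(unmatchedR M) ⊆ T := by
  obtain ⟨⟨M, hM, f, -, hf⟩, -⟩ := hc
  exact ⟨M, hM, fun x hx => hB _ (hf x hx)⟩

theorem inter_nonempty_of_nonTopLinked (hc : StructCont A B) (hB : ∀ e ∈ B, e.2 ∈ T)
    {S : Set X} (hS : NonTopLinked (digraphRel A) S) : (S ∩ T).Nonempty := by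
  obtain ⟨x, hxS, i, hi⟩ := hc.2 S hS
  exact ⟨x, hxS, hB _ hi⟩

end StructCont

/-- integrity attack resilience: if every maximum matching of `B([A_def])`
has a right unmatched vertex in `X_def`, or some non-top-linked SCC of `D([A_def])`
consists exclusively of `X_def` vertices, then no attacker matrix `[B_att]` supported on
`X_att` makes `([A_def],[B_att])` structurally controllable. -/
theorem stmt_11 {X I : Type*} [Fintype X] (Adef : Finset (X × X))
    (Xdef Xatt : Set X) (hpart : Xdef = Xattᶜ)
    (h : (∀ M : Finset (X × X), IsMaxMatching Adef M → ∃ x ∈ unmatchedR M, x ∈ Xdef) ∨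
         (∃ S : Set X, NonTopLinked (digraphRel Adef) S ∧ S ⊆ Xdef)) :
    ∀ Batt : Finset (I × X), (∀ e ∈ Batt, e.2 ∈ Xatt) → ¬ StructCont Adef Batt := by
  intro Batt hB hc
  subst hpart
  rcases h with h | ⟨S, hS, hSdef⟩
  · obtain ⟨M, hM, hMatt⟩ := hc.exists_isMaxMatching_unmatchedR_subset hB
    obtain ⟨x, hx, hxdef⟩ := h M hM
    exact hxdef (hMatt hx)
  · obtain ⟨x, hxS, hxatt⟩ := hc.inter_nonempty_of_nonTopLinked hB hS
    exact hSdef hxS hxatt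
end
end

section
/- (Complete controllability by attacker) With attacker inputs connectable only to X_att, there exists [B_att] supported on X_att such that ([A_def],[B_att]) is structurally controllable if and only if some maximum matching of B([A_def]) has all its right unmatched vertices in X_att and every non-top-linked SCC of D([A_def]) contains at least one vertex of X_att. -/
open scoped Classical

noncomputable section

section

variable {X I : Type*} [Fintype X] {A : Finset (X × X)} {S : Set X}

theorem StructCont.unmatchedR_and_sources_mem_of_support {B : Finset (I × X)}
    (hB : ∀ e ∈ B, e.2 ∈ S) (h : StructCont A B) :
    (∃ M : Finset (X × X), IsMaxMatching A M ∧ ∀ x ∈ unmatchedR M, x ∈ S) ∧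
      ∀ T : Set X, NonTopLinked (digraphRel A) T → ∃ x ∈ T, x ∈ S := by
  obtain ⟨⟨M, hM, f, -, hf⟩, hsources⟩ := h
  refine ⟨⟨M, hM, fun x hx => hB _ (hf x hx)⟩, fun T hT => ?_⟩
  obtain ⟨x, hxT, i, hi⟩ := hsources T hT
  exact ⟨x, hxT, hB _ hi⟩

/-- Each vertex of `S` gets an input of its own, which makes the injectivity requirement of
`StructCont` automatic. -/
def dedicatedInputs (S : Set X) : Finset (Fin (Fintype.card X) × X) :=
  (Finset.univ.filter (· ∈ S)).image fun x => (Fintype.equivFin X x, x)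

theorem mem_dedicatedInputs {i : Fin (Fintype.card X)} {x : X} :
    (i, x) ∈ dedicatedInputs S ↔ x ∈ S ∧ Fintype.equivFin X x = i := by
  simp only [dedicatedInputs, Finset.mem_image, Finset.mem_filter, Finset.mem_univ, true_and,
    Prod.mk.injEq]
  constructor
  · rintro ⟨y, hy, rfl, rfl⟩
    exact ⟨hy, rfl⟩
  · rintro ⟨hx, rfl⟩
    exact ⟨x, hx, rfl, rfl⟩

theorem dedicatedInputs_support : ∀ e ∈ dedicatedInputs S, e.2 ∈ S :=
  fun _ he => (mem_dedicatedInputs.mp he).1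

theorem structCont_dedicatedInputs
    (hmatch : ∃ M : Finset (X × X), IsMaxMatching A M ∧ ∀ x ∈ unmatchedR M, x ∈ S)
    (hsources : ∀ T : Set X, NonTopLinked (digraphRel A) T → ∃ x ∈ T, x ∈ S) :
    StructCont A (dedicatedInputs S) := by
  obtain ⟨M, hM, hunmatched⟩ := hmatch
  refine ⟨⟨M, hM, Fintype.equivFin X, (Fintype.equivFin X).injective.injOn,
    fun x hx => mem_dedicatedInputs.mpr ⟨hunmatched x hx, rfl⟩⟩, fun T hT => ?_⟩
  obtain ⟨x, hxT, hxS⟩ := hsources T hT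
  exact ⟨x, hxT, _, mem_dedicatedInputs.mpr ⟨hxS, rfl⟩⟩

end

theorem stmt_12_general {X : Type*} [Fintype X] (Adef : Finset (X × X))
    (Xatt : Set X) :
    (∃ (a : ℕ) (Batt : Finset (Fin a × X)),
        (∀ e ∈ Batt, e.2 ∈ Xatt) ∧ StructCont Adef Batt) ↔
    ((∃ M : Finset (X × X), IsMaxMatching Adef M ∧ ∀ x ∈ unmatchedR M, x ∈ Xatt) ∧
     (∀ S : Set X, NonTopLinked (digraphRel Adef) S → ∃ x ∈ S, x ∈ Xatt)) := by
  constructor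
  · rintro ⟨_, Batt, hsupport, hcont⟩
    exact hcont.unmatchedR_and_sources_mem_of_support hsupport
  · rintro ⟨hmatch, hsources⟩
    exact ⟨_, dedicatedInputs Xatt, dedicatedInputs_support,
      structCont_dedicatedInputs hmatch hsources⟩

/-- complete controllability by the attacker: there exists an attacker
input structure `[B_att]` supported on `X_att` making `([A_def],[B_att])` structurally
controllable iff some maximum matching of `B([A_def])` has all right unmatched vertices
in `X_att` and every non-top-linked SCC of `D([A_def])` contains an `X_att` vertex. -/
theorem stmt_12 {X : Type*} [Fintype X] (Adef : Finset (X × X))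
    (Xdef Xatt : Set X) (hpart : Xdef = Xattᶜ) :
    (∃ (a : ℕ) (Batt : Finset (Fin a × X)),
        (∀ e ∈ Batt, e.2 ∈ Xatt) ∧ StructCont Adef Batt) ↔
    ((∃ M : Finset (X × X), IsMaxMatching Adef M ∧ ∀ x ∈ unmatchedR M, x ∈ Xatt) ∧
     (∀ S : Set X, NonTopLinked (digraphRel Adef) S → ∃ x ∈ S, x ∈ Xatt)) :=
  stmt_12_general Adef Xatt
end
end

section
/- Adding edges to a digraph can only merge or preserve strongly connected components and cannot create new non-top-linked SCCs disjoint from existing ones: if E ⊆ E', then every non-top-linked SCC of D' = (V, E') contains a non-top-linked SCC of D = (V, E) as a subset. -/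
section

variable {V : Type*}

theorem Reach.mono {E E' : V → V → Prop} (hEE : ∀ u v, E u v → E' u v) {u v : V}
    (huv : Reach E u v) : Reach E' u v :=
  Relation.ReflTransGen.mono hEE u v huv

theorem mem_of_reach_of_no_incoming {E : V → V → Prop} {S : Set V}
    (hS : ∀ u v, v ∈ S → u ∉ S → ¬ E u v) {u v : V} (huv : Reach E u v) (hv : v ∈ S) :
    u ∈ S := by
  induction huv with
  | refl => exact hv
  | @tail b c _ hbc ih => exact ih (by_contra fun hb => hS b c hv hb hbc)

def sccOf (E : V → V → Prop) (m : V) : Set V := {u | Reach E m u ∧ Reach E u m}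

theorem isSCC_sccOf (E : V → V → Prop) (m : V) : IsSCC E (sccOf E m) := by
  refine ⟨⟨m, .refl, .refl⟩, fun a ha b hb => ha.2.trans hb.1, fun T hsub hT => ?_⟩
  have hm : m ∈ T := hsub ⟨.refl, .refl⟩
  exact (Set.Subset.antisymm hsub fun t ht => ⟨hT m hm t ht, hT t ht m hm⟩).symm

theorem nonTopLinked_sccOf {E : V → V → Prop} {m : V} (hm : ∀ u, Reach E u m → Reach E m u) :
    NonTopLinked E (sccOf E m) := by
  refine ⟨isSCC_sccOf E m, fun u v hv hu huv => hu ?_⟩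
  have hum : Reach E u m := (Relation.ReflTransGen.single huv).trans hv.2
  exact ⟨hm u hum, hum⟩

theorem exists_reach_minimal [Finite V] (E : V → V → Prop) {S : Set V} (hS : S.Nonempty) :
    ∃ m ∈ S, ∀ u ∈ S, Reach E u m → Reach E m u := by
  let r : V → V → Prop := fun x y => Reach E x y ∧ ¬ Reach E y x
  have : IsTrans V r :=
    ⟨fun _ _ _ ⟨hxy, hyx⟩ ⟨hyz, _⟩ => ⟨hxy.trans hyz, fun hzx => hyx (hyz.trans hzx)⟩⟩
  have : Std.Irrefl r := ⟨fun _ ⟨hxx, hnxx⟩ => hnxx hxx⟩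
  obtain ⟨m, hm, hmin⟩ := (Finite.wellFounded_of_trans_of_irrefl r).has_min S hS
  exact ⟨m, hm, fun u hu hum => by_contra fun hmu => hmin u hu ⟨hum, hmu⟩⟩

end

/-- adding edges only merges or preserves SCCs: if `E ⊆ E'`, every
non-top-linked SCC of `(V, E')` contains a non-top-linked SCC of `(V, E)`. -/
theorem stmt_15 {V : Type*} [Fintype V] (E E' : V → V → Prop)
    (hEE : ∀ u v, E u v → E' u v)
    (S' : Set V) (hS' : NonTopLinked E' S') :
    ∃ S : Set V, NonTopLinked E S ∧ S ⊆ S' := by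
  obtain ⟨⟨hne, -, -⟩, hno_incoming⟩ := hS'
  obtain ⟨m, hm, hmin⟩ := exists_reach_minimal E hne
  have hclosed : ∀ u, Reach E u m → u ∈ S' := fun u hum =>
    mem_of_reach_of_no_incoming hno_incoming (hum.mono hEE) hm
  exact ⟨sccOf E m, nonTopLinked_sccOf fun u hum => hmin u (hclosed u hum) hum,
    fun u hu => hclosed u hu.2⟩
end
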